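/- Let α ∈ (0,1) be a real number and n ∈ ℤ. There exists a constant C > 0 (depending on α and n) such that for all complex numbers z and w one has | |z|^{α−n} z^n − |w|^{α−n} w^n | ≤ C |z − w|^α; i.e., the map z ↦ |z|^{α−n} z^n is Hölder continuous of order α on ℂ. -/

import Mathlib

/-!
Write `f(z) = |z|^α u^n` with `u = z/|z|`, `v = w/|w|`, and assume `|w| ≤ |z|`.
If `|z - w| ≥ |z|`, then `|f z|, |f w| ≤ |z - w|^α`. Otherwise
`f z - f w = (|z|^α - |w|^α) u^n + |w|^α (u^n - v^n)`: the first term is at most `|z - w|^α`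
by subadditivity of `t ↦ t^α`, and since `|u^n - v^n| ≤ |n| |u - v| ≤ 2|n| |z - w|/|z|` the
second is at most `2|n| |z|^α (|z - w|/|z|) ≤ 2|n| |z|^α (|z - w|/|z|)^α = 2|n| |z - w|^α`.
-/

theorem norm_pow_sub_pow_le_of_norm_le_one {R : Type*} [NormedRing R] [NormOneClass R]
    {u v : R} (hu : ‖u‖ ≤ 1) (hv : ‖v‖ ≤ 1) (k : ℕ) :
    ‖u ^ k - v ^ k‖ ≤ k * ‖u - v‖ := by
  induction k with
  | zero => simp
  | succ k ih =>
    have hvk : ‖v ^ k‖ ≤ 1 := (norm_pow_le v k).trans (pow_le_one₀ (norm_nonneg v) hv)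
    calc ‖u ^ (k + 1) - v ^ (k + 1)‖ = ‖u * (u ^ k - v ^ k) + (u - v) * v ^ k‖ := by
          rw [pow_succ', pow_succ']; noncomm_ring
      _ ≤ ‖u‖ * ‖u ^ k - v ^ k‖ + ‖u - v‖ * ‖v ^ k‖ :=
          (norm_add_le _ _).trans (add_le_add (norm_mul_le _ _) (norm_mul_le _ _))
      _ ≤ 1 * (k * ‖u - v‖) + ‖u - v‖ * 1 := by gcongr
      _ = (k + 1 : ℕ) * ‖u - v‖ := by push_cast; ring

theorem norm_zpow_sub_zpow_le_of_norm_eq_one {K : Type*} [NormedDivisionRing K]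
    {u v : K} (hu : ‖u‖ = 1) (hv : ‖v‖ = 1) (n : ℤ) :
    ‖u ^ n - v ^ n‖ ≤ n.natAbs * ‖u - v‖ := by
  obtain ⟨k, rfl | rfl⟩ := Int.eq_nat_or_neg n
  · simpa using norm_pow_sub_pow_le_of_norm_le_one hu.le hv.le k
  · have hu0 : u ^ k ≠ 0 := pow_ne_zero _ (norm_ne_zero_iff.mp (by simp [hu]))
    have hv0 : v ^ k ≠ 0 := pow_ne_zero _ (norm_ne_zero_iff.mp (by simp [hv]))
    rw [zpow_neg, zpow_neg, zpow_natCast, zpow_natCast, inv_sub_inv' hu0 hv0, norm_mul,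
      norm_mul, norm_inv, norm_inv, norm_pow, norm_pow, hu, hv, norm_sub_rev]
    simpa using norm_pow_sub_pow_le_of_norm_le_one hu.le hv.le k

theorem NormedSpace.norm_mul_norm_normalize_sub_normalize_le {V : Type*}
    [NormedAddCommGroup V] [NormedSpace ℝ V] (x y : V) :
    ‖x‖ * ‖normalize x - normalize y‖ ≤ 2 * ‖x - y‖ := by
  have hy : ‖normalize y‖ ≤ 1 := by
    rcases eq_or_ne y 0 with rfl | hy
    · simp
    · exact (norm_normalize hy).le
  calc ‖x‖ * ‖normalize x - normalize y‖
        = ‖(x - y) + (‖y‖ - ‖x‖) • normalize y‖ := by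
        rw [← norm_smul_of_nonneg (norm_nonneg x), smul_sub, sub_smul, norm_smul_normalize,
          norm_smul_normalize]
        congr 1; abel
    _ ≤ ‖x - y‖ + |‖y‖ - ‖x‖| * ‖normalize y‖ := by
        rw [← Real.norm_eq_abs, ← norm_smul]; exact norm_add_le _ _
    _ ≤ ‖x - y‖ + ‖x - y‖ * 1 := by
        gcongr
        rw [abs_sub_comm]; exact abs_norm_sub_norm_le x y
    _ = 2 * ‖x - y‖ := by ring

theorem Real.rpow_sub_rpow_le_sub_rpow {a b p : ℝ} (hb : 0 ≤ b) (hba : b ≤ a) (hp0 : 0 ≤ p)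
    (hp1 : p ≤ 1) : a ^ p - b ^ p ≤ (a - b) ^ p := by
  have := Real.rpow_add_le_add_rpow (sub_nonneg.2 hba) hb hp0 hp1
  rw [sub_add_cancel] at this
  linarith

theorem Real.rpow_mul_div_le_rpow {d r p : ℝ} (hd : 0 ≤ d) (hdr : d ≤ r) (hp1 : p ≤ 1) :
    r ^ p * (d / r) ≤ d ^ p := by
  rcases hd.eq_or_lt with rfl | hd
  · simpa using Real.rpow_nonneg le_rfl p
  have hr : 0 < r := hd.trans_le hdr
  calc r ^ p * (d / r) ≤ r ^ p * (d / r) ^ p := by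
        gcongr
        exact Real.self_le_rpow_of_le_one (by positivity) ((div_le_one hr).2 hdr) hp1
    _ = d ^ p := by rw [← Real.mul_rpow hr.le (by positivity), mul_div_cancel₀ _ hr.ne']

noncomputable def gaugePow (α : ℝ) (n : ℤ) (z : ℂ) : ℂ :=
  ((‖z‖ ^ (α - (n : ℝ)) : ℝ) : ℂ) * z ^ n

section

variable {α : ℝ} (n : ℤ)

theorem gaugePow_eq_mul_normalize_zpow (hα : α ≠ 0) (z : ℂ) :
    gaugePow α n z = ((‖z‖ ^ α : ℝ) : ℂ) * NormedSpace.normalize z ^ n := by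
  rcases eq_or_ne z 0 with rfl | hz
  · rcases eq_or_ne n 0 with rfl | hn <;> simp [gaugePow, Real.zero_rpow hα, zero_zpow, *]
  have hr : 0 < ‖z‖ := norm_pos_iff.2 hz
  rw [gaugePow, NormedSpace.normalize, Complex.real_smul, mul_zpow, ← mul_assoc,
    ← Complex.ofReal_zpow, ← Complex.ofReal_mul, inv_zpow', ← Real.rpow_intCast,
    ← Real.rpow_add hr, Int.cast_neg, ← sub_eq_add_neg]

theorem norm_gaugePow (hα : α ≠ 0) (z : ℂ) : ‖gaugePow α n z‖ = ‖z‖ ^ α := by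
  rcases eq_or_ne z 0 with rfl | hz
  · simp [gaugePow_eq_mul_normalize_zpow n hα, Real.zero_rpow hα]
  rw [gaugePow_eq_mul_normalize_zpow n hα, norm_mul, norm_zpow, NormedSpace.norm_normalize hz,
    one_zpow, mul_one, Complex.norm_real, Real.norm_of_nonneg (by positivity)]

theorem norm_gaugePow_sub_le_of_norm_le (hα0 : 0 < α) (hα1 : α ≤ 1) {z w : ℂ}
    (h : ‖w‖ ≤ ‖z‖) :
    ‖gaugePow α n z - gaugePow α n w‖ ≤ (2 * n.natAbs + 2) * ‖z - w‖ ^ α := by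
  set r := ‖z‖
  set s := ‖w‖
  set d := ‖z - w‖
  have hsα : s ^ α ≤ r ^ α := by gcongr
  rcases le_or_gt r d with hrd | hdr
  · calc ‖gaugePow α n z - gaugePow α n w‖ ≤ r ^ α + s ^ α := by
          simpa only [norm_gaugePow n hα0.ne'] using
            norm_sub_le (gaugePow α n z) (gaugePow α n w)
      _ ≤ 2 * d ^ α := by linarith [show r ^ α ≤ d ^ α by gcongr]
      _ ≤ (2 * n.natAbs + 2) * d ^ α := by gcongr; linarith [n.natAbs.cast_nonneg (α := ℝ)]
  have hr : 0 < r := (norm_nonneg _).trans_lt hdr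
  have hw : w ≠ 0 := norm_pos_iff.1 (by linarith [norm_sub_norm_le z w] : 0 < s)
  set u := NormedSpace.normalize z
  set v := NormedSpace.normalize w
  have hu : ‖u‖ = 1 := NormedSpace.norm_normalize (norm_pos_iff.1 hr)
  have huv : ‖u - v‖ ≤ 2 * d / r := by
    rw [le_div_iff₀' hr]; exact NormedSpace.norm_mul_norm_normalize_sub_normalize_le z w
  have hdirection : s ^ α * ‖u ^ n - v ^ n‖ ≤ 2 * n.natAbs * d ^ α := calc
    s ^ α * ‖u ^ n - v ^ n‖ ≤ r ^ α * (n.natAbs * (2 * d / r)) := by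
      gcongr
      exact (norm_zpow_sub_zpow_le_of_norm_eq_one hu (NormedSpace.norm_normalize hw) n).trans
        (by gcongr)
    _ = 2 * n.natAbs * (r ^ α * (d / r)) := by ring
    _ ≤ 2 * n.natAbs * d ^ α := by
      gcongr; exact Real.rpow_mul_div_le_rpow (norm_nonneg _) hdr.le hα1
  calc ‖gaugePow α n z - gaugePow α n w‖
      = ‖((r ^ α - s ^ α : ℝ) : ℂ) * u ^ n
          + ((s ^ α : ℝ) : ℂ) * (u ^ n - v ^ n)‖ := by
        rw [gaugePow_eq_mul_normalize_zpow n hα0.ne', gaugePow_eq_mul_normalize_zpow n hα0.ne']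
        congr 1; push_cast; ring
    _ ≤ (r ^ α - s ^ α) + s ^ α * ‖u ^ n - v ^ n‖ := by
        refine (norm_add_le _ _).trans_eq ?_
        rw [norm_mul, norm_mul, norm_zpow, hu, one_zpow, mul_one, Complex.norm_real,
          Complex.norm_real, Real.norm_of_nonneg (by linarith), Real.norm_of_nonneg (by positivity)]
    _ ≤ d ^ α + 2 * n.natAbs * d ^ α := by
        gcongr
        exact (Real.rpow_sub_rpow_le_sub_rpow (norm_nonneg w) h hα0.le hα1).trans
          (by gcongr; exact norm_sub_norm_le z w)
    _ ≤ (2 * n.natAbs + 2) * d ^ α := by nlinarith [Real.rpow_nonneg (norm_nonneg (z - w)) α]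

end

/-- Lemma 2.2 (nl:2): for `α ∈ (0,1)` and `n : ℤ`, there is `C > 0` such that
`| |z|^(α−n) z^n − |w|^(α−n) w^n | ≤ C |z − w|^α` for all `z w : ℂ`. -/
theorem nonlinearity_holder_estimate (α : ℝ) (hα0 : 0 < α) (hα1 : α < 1) (n : ℤ) :
    ∃ C : ℝ, 0 < C ∧ ∀ z w : ℂ,
      ‖((‖z‖ ^ (α - (n : ℝ)) : ℝ) : ℂ) * z ^ n
          - ((‖w‖ ^ (α - (n : ℝ)) : ℝ) : ℂ) * w ^ n‖
        ≤ C * ‖z - w‖ ^ α := by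
  refine ⟨2 * n.natAbs + 2, by positivity, fun z w => ?_⟩
  change ‖gaugePow α n z - gaugePow α n w‖ ≤ _
  rcases le_total ‖w‖ ‖z‖ with h | h
  · exact norm_gaugePow_sub_le_of_norm_le n hα0 hα1.le h
  · rw [norm_sub_rev, norm_sub_rev z]
    exact norm_gaugePow_sub_le_of_norm_le n hα0 hα1.le h
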